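/- arXiv:1110.0194 — 5 statements merged into one kernel-verified Lean document; each statement's English description precedes it below -/
import Mathlib

section
/- Let {X_n} be a random process with values in (0,1) satisfying conditions (c1) and (c3) with respect to the i.i.d. sequence {S_n}. Then for any fixed β with 0 < β < E[log S], lim_{n→∞} P( X_n ≤ 2^{-2^{β n}} ) = P(X_∞ = 0). -/
open MeasureTheory ProbabilityTheory Filter

lemma aux_grow {β mu c : ℝ} (hβmu : β < mu) (hc : 1 ≤ c)
    {L s : ℕ → ℝ} (hL : ∀ n, 0 < L n) (hs : ∀ n, 1 ≤ s n)
    (hrec : ∀ n, s n * L n - Real.logb 2 c ≤ L (n + 1))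
    (hLtop : Tendsto L atTop atTop)
    (hsl : Tendsto (fun n : ℕ => (∑ k ∈ Finset.range n, Real.logb 2 (s k)) / n)
      atTop (nhds mu)) :
    ∀ᶠ n : ℕ in atTop, (2 : ℝ) ^ (β * (n : ℝ)) ≤ L n := by
  set δ : ℝ := (mu - β) / 2 with hδdef
  have hδ : 0 < δ := by rw [hδdef]; linarith
  have h2δlt : (2 : ℝ) ^ (-δ) < 1 :=
    Real.rpow_lt_one_of_one_lt_of_neg one_lt_two (by linarith)
  have h2δpos : (0 : ℝ) < (2 : ℝ) ^ (-δ) := Real.rpow_pos_of_pos two_pos _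
  have hfac : 0 < 1 - (2 : ℝ) ^ (-δ) := by linarith
  set T : ℝ := max 1 (Real.logb 2 c / (1 - (2 : ℝ) ^ (-δ))) with hT
  obtain ⟨m, hm⟩ := eventually_atTop.mp (hLtop.eventually_ge_atTop T)
  have hlogc : 0 ≤ Real.logb 2 c := Real.logb_nonneg one_lt_two hc
  have step : ∀ n, m ≤ n →
      Real.logb 2 (s n) + Real.logb 2 (L n) - δ ≤ Real.logb 2 (L (n + 1)) := by
    intro n hn
    have hTLn : T ≤ L n := hm n hn
    have h1L : (1 : ℝ) ≤ L n := le_trans (le_max_left _ _) hTLn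
    have hsn : (0 : ℝ) < s n := lt_of_lt_of_le one_pos (hs n)
    have hcle : Real.logb 2 c ≤ (1 - (2 : ℝ) ^ (-δ)) * (s n * L n) := by
      have h1 : Real.logb 2 c / (1 - (2 : ℝ) ^ (-δ)) ≤ L n :=
        le_trans (le_max_right _ _) hTLn
      have h2 : Real.logb 2 c ≤ (1 - (2 : ℝ) ^ (-δ)) * L n := by
        rw [div_le_iff₀ hfac] at h1; linarith
      have h3 : L n ≤ s n * L n := le_mul_of_one_le_left (hL n).le (hs n)
      nlinarith
    have key : (2 : ℝ) ^ (-δ) * (s n * L n) ≤ L (n + 1) := by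
      have h4 := hrec n
      have h5 : (2 : ℝ) ^ (-δ) * (s n * L n)
          = s n * L n - (1 - (2 : ℝ) ^ (-δ)) * (s n * L n) := by ring
      linarith
    have hpos : (0 : ℝ) < (2 : ℝ) ^ (-δ) * (s n * L n) := by positivity
    have heq : Real.logb 2 ((2 : ℝ) ^ (-δ) * (s n * L n))
        = Real.logb 2 (s n) + Real.logb 2 (L n) - δ := by
      rw [Real.logb_mul (ne_of_gt h2δpos) (by positivity),
        Real.logb_mul (ne_of_gt hsn) (ne_of_gt (hL n)),
        Real.logb_rpow (by norm_num) (by norm_num)]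
      ring
    calc Real.logb 2 (s n) + Real.logb 2 (L n) - δ
        = Real.logb 2 ((2 : ℝ) ^ (-δ) * (s n * L n)) := heq.symm
      _ ≤ Real.logb 2 (L (n + 1)) :=
          Real.logb_le_logb_of_le one_lt_two hpos key
  set A : ℕ → ℝ := fun n => ∑ k ∈ Finset.range n, Real.logb 2 (s k) with hA
  have cum : ∀ n, m ≤ n →
      Real.logb 2 (L m) + A n - A m - δ * n + δ * m ≤ Real.logb 2 (L n) := by
    intro n hn
    induction n, hn using Nat.le_induction with
    | base => linarith
    | succ n hn ih =>
      have h1 := step n hn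
      have h2 : A (n + 1) = A n + Real.logb 2 (s n) := Finset.sum_range_succ _ _
      push_cast
      push_cast at ih
      linarith
  have hAt : Tendsto (fun n : ℕ => A n - δ * n - β * n) atTop atTop := by
    have h1 : Tendsto (fun n : ℕ => (n : ℝ) * (A n / n - (δ + β))) atTop atTop :=
      Filter.Tendsto.atTop_mul_pos (by rw [hδdef]; linarith)
        tendsto_natCast_atTop_atTop (hsl.sub_const (δ + β))
    refine h1.congr' ?_
    filter_upwards [eventually_ge_atTop 1] with n hn
    have hn0 : (n : ℝ) ≠ 0 := by positivity
    field_simp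
    ring
  have hev := hAt.eventually_ge_atTop (A m - δ * m - Real.logb 2 (L m))
  filter_upwards [hev, eventually_ge_atTop m] with n h1 h2
  have h3 := cum n h2
  have h4 : β * n ≤ Real.logb 2 (L n) := by linarith
  calc (2 : ℝ) ^ (β * n) ≤ (2 : ℝ) ^ Real.logb 2 (L n) :=
        Real.rpow_le_rpow_of_exponent_le one_le_two h4
    _ = L n := Real.rpow_logb two_pos (by norm_num) (hL n)

theorem stmt_3
    {Ω : Type*} [MeasurableSpace Ω] (P : Measure Ω) [IsProbabilityMeasure P]
    (S : ℕ → Ω → ℝ) (X : ℕ → Ω → ℝ) (Xinf : Ω → ℝ)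
    (hSmeas : ∀ n, Measurable (S n))
    (hXmeas : ∀ n, Measurable (X n))
    (hXinfmeas : Measurable Xinf)
    -- `S n` takes values in `[1, ∞)`
    (hS1 : ∀ n ω, 1 ≤ S n ω)
    -- `{S_n}` are i.i.d. copies of `S = S 0`
    (hindep : iIndepFun S P)
    (hident : ∀ n, P.map (S n) = P.map (S 0))
    -- `log S` is integrable with finite variance
    (hint : Integrable (fun ω => Real.logb 2 (S 0 ω)) P)
    (hmem2 : MemLp (fun ω => Real.logb 2 (S 0 ω)) 2 P)
    -- `X n` takes values in `(0, 1)`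
    (hXrange : ∀ n ω, X n ω ∈ Set.Ioo (0 : ℝ) 1)
    -- (c1): almost sure convergence to `X_∞`
    (hc1 : ∀ᵐ ω ∂P, Tendsto (fun n => X n ω) atTop (nhds (Xinf ω)))
    -- (c3): `X_{n+1} ≤ c ⬝ X_n ^ S_n` for some constant `c ≥ 1`
    (c : ℝ) (hc : 1 ≤ c)
    (hc3 : ∀ n, ∀ᵐ ω ∂P, X (n + 1) ω ≤ c * X n ω ^ (S n ω))
    -- `(S_n, S_{n+1}, …)` is independent of `(X_0, …, X_n)`
    (hc4 : ∀ n, Indep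
      (⨆ i, ⨆ (_ : n ≤ i), MeasurableSpace.comap (S i) inferInstance)
      (⨆ m, ⨆ (_ : m ≤ n), MeasurableSpace.comap (X m) inferInstance) P)
    (β : ℝ) (hβ0 : 0 < β) (hβ : β < ∫ ω, Real.logb 2 (S 0 ω) ∂P) :
    Tendsto (fun n => (P {ω | X n ω ≤
        (2 : ℝ) ^ (-((2 : ℝ) ^ (β * n)))}).toReal) atTop
      (nhds ((P {ω | Xinf ω = 0}).toReal) ) := by
  have mlogb : Measurable fun x : ℝ => Real.logb 2 x := by
    unfold Real.logb
    exact Real.measurable_log.div_const _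
  have hident' : ∀ i, IdentDistrib (fun ω => Real.logb 2 (S i ω))
      (fun ω => Real.logb 2 (S 0 ω)) P P := fun i =>
    IdentDistrib.comp ⟨(hSmeas i).aemeasurable, (hSmeas 0).aemeasurable, hident i⟩ mlogb
  have hindep' : Pairwise (Function.onFun (IndepFun · · P) fun i ω => Real.logb 2 (S i ω)) := by
    intro i j hij
    exact (hindep.indepFun hij).comp mlogb mlogb
  have hslln := strong_law_ae_real (fun i ω => Real.logb 2 (S i ω)) hint hindep' hident'
  have hc3' : ∀ᵐ ω ∂P, ∀ n, X (n + 1) ω ≤ c * X n ω ^ (S n ω) := ae_all_iff.2 hc3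
  have key : ∀ᵐ ω ∂P, ∀ᶠ n in atTop,
      (ω ∈ {ω | X n ω ≤ (2 : ℝ) ^ (-((2 : ℝ) ^ (β * (n : ℕ))))} ↔
        ω ∈ {ω | Xinf ω = 0}) := by
    filter_upwards [hc1, hc3', hslln] with ω hconv hrecω hsllnω
    have hXpos : ∀ n, 0 < X n ω := fun n => (hXrange n ω).1
    by_cases hX0 : Xinf ω = 0
    · -- growth case
      have hLpos : ∀ n, 0 < -Real.logb 2 (X n ω) := fun n =>
        neg_pos.mpr (Real.logb_neg one_lt_two (hXpos n) (hXrange n ω).2)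
      have hLtop : Tendsto (fun n => -Real.logb 2 (X n ω)) atTop atTop := by
        have h1 : Tendsto (fun n => X n ω) atTop (nhdsWithin 0 (Set.Ioi 0)) := by
          rw [tendsto_nhdsWithin_iff]
          exact ⟨hX0 ▸ hconv, Eventually.of_forall fun n => hXpos n⟩
        have h2 := (Real.tendsto_logb_nhdsGT_zero one_lt_two).comp h1
        exact tendsto_neg_atBot_atTop.comp h2
      have hrec' : ∀ n, S n ω * (-Real.logb 2 (X n ω)) - Real.logb 2 c
          ≤ -Real.logb 2 (X (n + 1) ω) := by
        intro n
        have h := hrecω n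
        have hrp : (0 : ℝ) < X n ω ^ S n ω := Real.rpow_pos_of_pos (hXpos n) _
        have h2 : Real.logb 2 (X (n + 1) ω) ≤ Real.logb 2 (c * X n ω ^ S n ω) :=
          Real.logb_le_logb_of_le one_lt_two (hXpos (n + 1)) h
        rw [Real.logb_mul (by linarith) (ne_of_gt hrp),
          Real.logb_rpow_eq_mul_logb_of_pos (hXpos n)] at h2
        linarith
      have hgrow := aux_grow hβ hc hLpos (fun n => hS1 n ω) hrec' hLtop hsllnω
      filter_upwards [hgrow] with n hn
      simp only [Set.mem_setOf_eq, hX0]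
      refine ⟨fun _ => trivial, fun _ => ?_⟩
      rw [← Real.logb_le_iff_le_rpow one_lt_two (hXpos n)]
      linarith
    · -- positive limit case
      have h0le : 0 ≤ Xinf ω := ge_of_tendsto' hconv fun n => (hXpos n).le
      have hpos : 0 < Xinf ω := lt_of_le_of_ne h0le (Ne.symm hX0)
      have hthresh : Tendsto (fun n : ℕ => (2 : ℝ) ^ (-((2 : ℝ) ^ (β * (n : ℕ)))))
          atTop (nhds 0) := by
        have h1 : Tendsto (fun n : ℕ => β * (n : ℝ)) atTop atTop :=
          Tendsto.const_mul_atTop hβ0 tendsto_natCast_atTop_atTop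
        have h2 : Tendsto (fun n : ℕ => (2 : ℝ) ^ (β * (n : ℝ))) atTop atTop := by
          simp_rw [Real.rpow_def_of_pos two_pos]
          exact Real.tendsto_exp_atTop.comp
            ((tendsto_const_mul_atTop_of_pos (Real.log_pos one_lt_two)).2 h1)
        have h3 : Tendsto (fun n : ℕ => -((2 : ℝ) ^ (β * (n : ℝ)))) atTop atBot :=
          tendsto_neg_atTop_atBot.comp h2
        exact (tendsto_rpow_atBot_of_base_gt_one 2 one_lt_two).comp h3
      have h5 : ∀ᶠ n in atTop, Xinf ω / 2 < X n ω :=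
        hconv.eventually_const_lt (by linarith)
      have h6 : ∀ᶠ n in atTop, (2 : ℝ) ^ (-((2 : ℝ) ^ (β * (n : ℕ)))) < Xinf ω / 2 :=
        hthresh.eventually_lt_const (by linarith)
      filter_upwards [h5, h6] with n hn1 hn2
      constructor
      · intro h; linarith
      · intro h; exact absurd h hX0
  have hmeasE : ∀ n : ℕ, MeasurableSet {ω | X n ω ≤ (2 : ℝ) ^ (-((2 : ℝ) ^ (β * (n : ℕ))))} :=
    fun n => measurableSet_le (hXmeas n) measurable_const
  have hmeasA : MeasurableSet {ω | Xinf ω = 0} := hXinfmeas (measurableSet_singleton 0)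
  have hmain := tendsto_measure_of_ae_tendsto_indicator_of_isFiniteMeasure
    (μ := P) atTop hmeasA hmeasE key
  exact (ENNReal.tendsto_toReal (measure_ne_top P _)).comp hmain
end

section
/- Let {X_n} be a random process with values in (0,1) such that X_n^{S_n} ≤ X_{n+1} almost surely for all n, where {S_n} are i.i.d. copies of a random variable S with values in [1,∞) and log S integrable with mean E[log S]. Then almost surely limsup_{n→∞} (1/n)·log(−log X_n) ≤ E[log S]; consequently, for every β > E[log S], lim_{n→∞} P( X_n ≤ 2^{-2^{β n}} ) = 0. -/
open MeasureTheory ProbabilityTheory Filter Topology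

theorem stmt_7
    {Ω : Type*} [MeasurableSpace Ω] (P : Measure Ω) [IsProbabilityMeasure P]
    (S : ℕ → Ω → ℝ) (X : ℕ → Ω → ℝ)
    (hSmeas : ∀ n, Measurable (S n))
    (hXmeas : ∀ n, Measurable (X n))
    -- `S n` takes values in `[1, ∞)`
    (hS1 : ∀ n ω, 1 ≤ S n ω)
    -- `{S_n}` are i.i.d. copies of `S = S 0`
    (hindep : iIndepFun S P)
    (hident : ∀ n, P.map (S n) = P.map (S 0))
    -- `log S` is integrable
    (hint : Integrable (fun ω => Real.logb 2 (S 0 ω)) P)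
    -- `X n` takes values in `(0, 1)`
    (hXrange : ∀ n ω, X n ω ∈ Set.Ioo (0 : ℝ) 1)
    -- (c2): `X_n ^ S_n ≤ X_{n+1}`
    (hc2 : ∀ n, ∀ᵐ ω ∂P, X n ω ^ (S n ω) ≤ X (n + 1) ω) :
    (∀ᵐ ω ∂P, limsup
        (fun n => Real.logb 2 (-(Real.logb 2 (X n ω))) / n) atTop
        ≤ ∫ ω, Real.logb 2 (S 0 ω) ∂P) ∧
    (∀ β : ℝ, (∫ ω, Real.logb 2 (S 0 ω) ∂P) < β →
      Tendsto (fun n => (P {ω | X n ω ≤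
          (2 : ℝ) ^ (-((2 : ℝ) ^ (β * n)))}).toReal) atTop (nhds 0)) := by
  have h2 : (1:ℝ) < 2 := one_lt_two
  set E := ∫ ω, Real.logb 2 (S 0 ω) ∂P with hEdef
  have hEnn : 0 ≤ E := integral_nonneg fun ω => Real.logb_nonneg h2 (hS1 0 ω)
  set Y : ℕ → Ω → ℝ := fun n ω => Real.logb 2 (S n ω) with hYdef
  have mlogb : Measurable fun x : ℝ => Real.logb 2 x :=
    Real.measurable_log.div_const _
  have hindepY : Pairwise (Function.onFun (IndepFun · · P) Y) := fun i j hij =>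
    (hindep.indepFun hij).comp mlogb mlogb
  have hidentY : ∀ i, IdentDistrib (Y i) (Y 0) P P := fun i =>
    (IdentDistrib.mk (hSmeas i).aemeasurable (hSmeas 0).aemeasurable (hident i)).comp mlogb
  have hslln := strong_law_ae_real Y hint hindepY hidentY
  -- the pointwise a.e. facts
  have key : ∀ᵐ ω ∂P,
      (∀ n : ℕ, Real.logb 2 (-(Real.logb 2 (X n ω)))
        ≤ Real.logb 2 (-(Real.logb 2 (X 0 ω))) + ∑ k ∈ Finset.range n, Y k ω) ∧
      Tendsto (fun n : ℕ => (∑ k ∈ Finset.range n, Y k ω) / n) atTop (𝓝 E) := by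
    filter_upwards [hslln, ae_all_iff.2 hc2] with ω hω hcω
    refine ⟨?_, hω⟩
    set a : ℕ → ℝ := fun n => -(Real.logb 2 (X n ω)) with hadef
    have hapos : ∀ n, 0 < a n := fun n =>
      neg_pos.2 (Real.logb_neg h2 (hXrange n ω).1 (hXrange n ω).2)
    have hstep : ∀ n, a (n+1) ≤ S n ω * a n := by
      intro n
      have hx := (hXrange n ω).1
      have h1 : Real.logb 2 (X n ω ^ S n ω) ≤ Real.logb 2 (X (n+1) ω) :=
        Real.logb_le_logb_of_le h2 (Real.rpow_pos_of_pos hx _) (hcω n)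
      rw [Real.logb_rpow_eq_mul_logb_of_pos hx] at h1
      simp only [hadef]
      nlinarith [h1]
    intro n
    induction n with
    | zero => simp
    | succ n ih =>
      have hS0 : (0:ℝ) < S n ω := lt_of_lt_of_le zero_lt_one (hS1 n ω)
      have h1 : Real.logb 2 (a (n+1)) ≤ Real.logb 2 (S n ω * a n) :=
        Real.logb_le_logb_of_le h2 (hapos (n+1)) (hstep n)
      rw [Real.logb_mul (ne_of_gt hS0) (ne_of_gt (hapos n))] at h1
      rw [Finset.sum_range_succ]
      calc Real.logb 2 (a (n+1)) ≤ Real.logb 2 (S n ω) + Real.logb 2 (a n) := h1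
        _ ≤ Real.logb 2 (S n ω) + (Real.logb 2 (a 0) + ∑ k ∈ Finset.range n, Y k ω) := by
            linarith [ih]
        _ = Real.logb 2 (a 0) + (∑ k ∈ Finset.range n, Y k ω + Y n ω) := by ring
  constructor
  · filter_upwards [key] with ω hω
    obtain ⟨hchain, hlim⟩ := hω
    set u : ℕ → ℝ := fun n => Real.logb 2 (-(Real.logb 2 (X n ω))) / n with hudef
    set g : ℕ → ℝ := fun n =>
      Real.logb 2 (-(Real.logb 2 (X 0 ω))) / n + (∑ k ∈ Finset.range n, Y k ω) / n with hgdef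
    have hg : Tendsto g atTop (𝓝 (0 + E)) :=
      (tendsto_const_div_atTop_nhds_zero_nat _).add hlim
    rw [zero_add] at hg
    have hug : ∀ n : ℕ, 1 ≤ n → u n ≤ g n := by
      intro n hn
      have hnpos : (0:ℝ) < n := by exact_mod_cast hn
      simp only [hudef, hgdef, ← add_div]
      exact div_le_div_of_nonneg_right (hchain n) hnpos.le |>.trans_eq rfl
    rw [limsup_eq]
    by_cases hbdd : BddBelow {a | ∀ᶠ n in atTop, u n ≤ a}
    · apply le_of_forall_pos_le_add
      intro ε hε
      apply csInf_le hbdd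
      have h1 : ∀ᶠ n : ℕ in atTop, g n < E + ε :=
        hg.eventually_lt_const (by linarith)
      filter_upwards [h1, eventually_ge_atTop 1] with n h1 h2
      exact (hug n h2).trans h1.le
    · rw [Real.sInf_of_not_bddBelow hbdd]
      exact hEnn
  · intro β hβ
    have hlim0 : ∀ᵐ ω ∂P, ∀ᶠ n : ℕ in atTop,
        (ω ∈ {ω | X n ω ≤ (2 : ℝ) ^ (-((2 : ℝ) ^ (β * n)))}) ↔ ω ∈ (∅ : Set Ω) := by
      filter_upwards [key] with ω hω
      obtain ⟨hchain, hlim⟩ := hω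
      have hg : Tendsto (fun n : ℕ =>
          Real.logb 2 (-(Real.logb 2 (X 0 ω))) / n + (∑ k ∈ Finset.range n, Y k ω) / n)
          atTop (𝓝 (0 + E)) :=
        (tendsto_const_div_atTop_nhds_zero_nat _).add hlim
      rw [zero_add] at hg
      have h1 := hg.eventually_lt_const hβ
      filter_upwards [h1, eventually_ge_atTop 1] with n h1 hn
      simp only [Set.mem_empty_iff_false, iff_false, Set.mem_setOf_eq]
      intro hcontra
      have hnpos : (0:ℝ) < n := by exact_mod_cast hn
      -- from hcontra : X n ω ≤ 2 ^ (-(2^(βn)))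
      have hxpos := (hXrange n ω).1
      have hlb : Real.logb 2 (X n ω) ≤ -((2:ℝ) ^ (β * n)) := by
        have := Real.logb_le_logb_of_le h2 hxpos hcontra
        rwa [Real.logb_rpow (by norm_num) (by norm_num)] at this
      have hlb2 : (2:ℝ) ^ (β * (n:ℝ)) ≤ -(Real.logb 2 (X n ω)) := by linarith
      have hlb3 : β * n ≤ Real.logb 2 (-(Real.logb 2 (X n ω))) := by
        have := Real.logb_le_logb_of_le h2 (Real.rpow_pos_of_pos two_pos _) hlb2
        rwa [Real.logb_rpow (by norm_num) (by norm_num)] at this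
      have : β ≤ Real.logb 2 (-(Real.logb 2 (X n ω))) / n := by
        rw [le_div_iff₀ hnpos]
        exact hlb3
      have h4 : Real.logb 2 (-(Real.logb 2 (X n ω))) / n ≤
          Real.logb 2 (-(Real.logb 2 (X 0 ω))) / n + (∑ k ∈ Finset.range n, Y k ω) / n := by
        rw [← add_div]
        exact div_le_div_of_nonneg_right (hchain n) hnpos.le
      linarith
    have hmble : ∀ n : ℕ, MeasurableSet {ω | X n ω ≤ (2 : ℝ) ^ (-((2 : ℝ) ^ (β * n)))} :=
      fun n => (hXmeas n) measurableSet_Iic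
    have := tendsto_measure_of_ae_tendsto_indicator_of_isFiniteMeasure
      (μ := P) atTop MeasurableSet.empty hmble hlim0
    rw [measure_empty] at this
    have h0 : Tendsto ENNReal.toReal (𝓝 0) (𝓝 (0:ℝ)) := by
      simpa using (ENNReal.tendsto_toReal (a := 0) (by simp))
    exact h0.comp this
end

section
/- Let W be a discrete binary-input memoryless symmetric channel with Bhattacharyya parameter Z(W), and let C be a linear code of block length n over 𝔽₂ containing at least one nonzero codeword, with minimum distance d_min (the minimum Hamming weight of a nonzero codeword of C). Then for every decoding map φ : Yⁿ → C, the average block error probability (1/|C|) · Σ_{c∈C} Σ_{y∈Yⁿ : φ(y) ≠ c} P(y|c) is at least Z(W)^{2·d_min} / 4. In particular, the MAP (minimum-average-error) block error probability of C over W is lower bounded by Z(W)^{2·d_min} / 4. -/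
open Finset

private lemma sqrt_prod_aux {ι : Type*} (s : Finset ι) (f : ι → ℝ) (hf : ∀ i, 0 ≤ f i) :
    Real.sqrt (∏ i ∈ s, f i) = ∏ i ∈ s, Real.sqrt (f i) := by
  classical
  induction s using Finset.cons_induction with
  | empty => simp
  | cons a s ha ih =>
      rw [Finset.prod_cons, Finset.prod_cons, Real.sqrt_mul (hf a), ih]

theorem stmt_10
    {Y : Type*} [Fintype Y]
    (W : ZMod 2 → Y → ℝ)
    -- `W` is a discrete channel
    (hW_nonneg : ∀ x y, 0 ≤ W x y)
    (hW_sum : ∀ x, ∑ y, W x y = 1)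
    -- `W` is symmetric: there is an involution pairing the outputs
    (π : Y → Y) (hπ : Function.Involutive π)
    (hsym : ∀ y, W 0 y = W 1 (π y))
    -- a linear code of block length `n` with a nonzero codeword
    (n : ℕ) (C : Submodule (ZMod 2) (Fin n → ZMod 2)) [Fintype C]
    (hC : ∃ c : Fin n → ZMod 2, c ∈ C ∧ c ≠ 0)
    -- `dmin` is the minimum Hamming weight of a nonzero codeword
    (dmin : ℕ)
    (hdmin : IsLeast {w : ℕ | ∃ c : Fin n → ZMod 2, c ∈ C ∧ c ≠ 0 ∧ w = hammingNorm c} dmin)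
    -- an arbitrary decoding map
    (φ : (Fin n → Y) → C) :
    (∑ y, Real.sqrt (W 0 y * W 1 y)) ^ (2 * dmin) / 4 ≤
      (1 / (Fintype.card C : ℝ)) *
        ∑ c : C, ∑ y ∈ Finset.univ.filter (fun y : Fin n → Y => φ y ≠ c),
          ∏ i, W ((c : Fin n → ZMod 2) i) (y i) := by
  classical
  obtain ⟨c₀, hc₀C, hc₀ne, hc₀norm⟩ := hdmin.1
  set Z : ℝ := ∑ y, Real.sqrt (W 0 y * W 1 y) with hZdef
  set c₀' : C := ⟨c₀, hc₀C⟩ with hc₀'def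
  have hc₀'ne : c₀' ≠ 0 := by
    intro h
    exact hc₀ne (congrArg Subtype.val h)
  -- channel probabilities
  set P : C → (Fin n → Y) → ℝ :=
    fun c y => ∏ i, W ((c : Fin n → ZMod 2) i) (y i) with hPdef
  have hP0 : ∀ c y, 0 ≤ P c y := fun c y => Finset.prod_nonneg fun i _ => hW_nonneg _ _
  have hPsum : ∀ c : C, ∑ y, P c y = 1 := by
    intro c
    rw [hPdef]
    rw [← Fintype.piFinset_univ, ← Finset.prod_univ_sum]
    simp [hW_sum]
  -- single coordinate Bhattacharyya value
  have hcoord : ∀ a b : ZMod 2, ∑ v, Real.sqrt (W a v * W b v) =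
      if a = b then 1 else Z := by
    intro a b
    by_cases hab : a = b
    · subst hab
      simp only [if_pos rfl]
      calc ∑ v, Real.sqrt (W a v * W a v) = ∑ v, W a v := by
            refine Finset.sum_congr rfl fun v _ => ?_
            exact Real.sqrt_mul_self (hW_nonneg a v)
        _ = 1 := hW_sum a
    · rw [if_neg hab]
      have h01 : (a = 0 ∧ b = 1) ∨ (a = 1 ∧ b = 0) := by revert hab; revert a b; decide
      rcases h01 with ⟨ha, hb⟩ | ⟨ha, hb⟩ <;> subst ha <;> subst hb
      · rfl
      · rw [hZdef]
        refine Finset.sum_congr rfl fun v _ => ?_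
        rw [mul_comm]
  -- pairwise Bhattacharyya coefficient
  have hZpair : ∀ c : C, ∑ y, Real.sqrt (P c y * P (c + c₀') y) = Z ^ dmin := by
    intro c
    have step1 : ∀ y : Fin n → Y, Real.sqrt (P c y * P (c + c₀') y) =
        ∏ i, Real.sqrt (W ((c : Fin n → ZMod 2) i) (y i) *
          W (((c : Fin n → ZMod 2) i + c₀ i)) (y i)) := by
      intro y
      rw [hPdef]
      simp only [← Finset.prod_mul_distrib]
      rw [sqrt_prod_aux _ _ fun i => mul_nonneg (hW_nonneg _ _) (hW_nonneg _ _)]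
      rfl
    simp only [step1]
    rw [← Fintype.piFinset_univ, Finset.sum_prod_piFinset univ
      (fun i v => Real.sqrt (W ((c : Fin n → ZMod 2) i) v *
        W ((c : Fin n → ZMod 2) i + c₀ i) v))]
    have step2 : ∀ i : Fin n,
        (∑ v, Real.sqrt (W ((c : Fin n → ZMod 2) i) v *
          W (((c : Fin n → ZMod 2) i + c₀ i)) v)) =
        if c₀ i = 0 then 1 else Z := by
      intro i
      rw [hcoord]
      congr 1
      simp [eq_comm, left_eq_add]
    simp only [step2]
    rw [Finset.prod_ite, Finset.prod_const, Finset.prod_const, one_pow, one_mul]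
    congr 1
    rw [hc₀norm]
    rfl
  -- nonnegativity of Z
  have hZ0 : 0 ≤ Z := Finset.sum_nonneg fun y _ => Real.sqrt_nonneg _
  -- error probability of a codeword
  set E : C → ℝ := fun c => ∑ y ∈ Finset.univ.filter (fun y : Fin n → Y => φ y ≠ c),
    P c y with hEdef
  -- Cauchy-Schwarz: pairwise lower bound via minima
  have hCS : ∀ c : C, (Z ^ dmin) ^ 2 ≤ 2 * ∑ y, min (P c y) (P (c + c₀') y) := by
    intro c
    have key := Finset.sum_mul_sq_le_sq_mul_sq Finset.univ
      (fun y : Fin n → Y => Real.sqrt (min (P c y) (P (c + c₀') y)))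
      (fun y : Fin n → Y => Real.sqrt (max (P c y) (P (c + c₀') y)))
    have e1 : ∀ y : Fin n → Y,
        Real.sqrt (min (P c y) (P (c + c₀') y)) * Real.sqrt (max (P c y) (P (c + c₀') y))
          = Real.sqrt (P c y * P (c + c₀') y) := by
      intro y
      rw [← Real.sqrt_mul (le_min (hP0 _ _) (hP0 _ _)), min_mul_max]
    have e2 : ∀ y : Fin n → Y,
        Real.sqrt (min (P c y) (P (c + c₀') y)) ^ 2 = min (P c y) (P (c + c₀') y) :=
      fun y => Real.sq_sqrt (le_min (hP0 _ _) (hP0 _ _))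
    have e3 : ∀ y : Fin n → Y,
        Real.sqrt (max (P c y) (P (c + c₀') y)) ^ 2 = max (P c y) (P (c + c₀') y) :=
      fun y => Real.sq_sqrt (le_max_of_le_left (hP0 _ _))
    simp only [e1, e2, e3] at key
    rw [hZpair c] at key
    have hmaxle : ∑ y, max (P c y) (P (c + c₀') y) ≤ 2 := by
      have : ∑ y, max (P c y) (P (c + c₀') y) ≤ ∑ y, (P c y + P (c + c₀') y) :=
        Finset.sum_le_sum fun y _ => max_le (le_add_of_nonneg_right (hP0 _ _))
          (le_add_of_nonneg_left (hP0 _ _))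
      rwa [Finset.sum_add_distrib, hPsum, hPsum, ← two_mul, mul_one] at this
    have hminnn : 0 ≤ ∑ y, min (P c y) (P (c + c₀') y) :=
      Finset.sum_nonneg fun y _ => le_min (hP0 _ _) (hP0 _ _)
    calc (Z ^ dmin) ^ 2 ≤ (∑ y, min (P c y) (P (c + c₀') y)) *
          ∑ y, max (P c y) (P (c + c₀') y) := key
      _ ≤ (∑ y, min (P c y) (P (c + c₀') y)) * 2 := by
          exact mul_le_mul_of_nonneg_left hmaxle hminnn
      _ = 2 * ∑ y, min (P c y) (P (c + c₀') y) := mul_comm _ _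
  -- the two error events cover everything
  have hErr : ∀ c : C, ∑ y, min (P c y) (P (c + c₀') y) ≤ E c + E (c + c₀') := by
    intro c
    have hne : c ≠ c + c₀' := by
      intro h
      exact hc₀'ne (by simpa [eq_comm, left_eq_add] using h)
    rw [hEdef]
    simp only [Finset.sum_filter]
    rw [← Finset.sum_add_distrib]
    refine Finset.sum_le_sum fun y _ => ?_
    by_cases hy : φ y = c
    · have hy' : φ y ≠ c + c₀' := fun h => hne (hy ▸ h)
      rw [if_neg (not_not_intro hy), if_pos hy', zero_add]
      exact min_le_right _ _
    · rw [if_pos hy]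
      refine (min_le_left _ _).trans (le_add_of_nonneg_right ?_)
      split
      · exact hP0 _ _
      · exact le_rfl
  -- combine
  have hpair : ∀ c : C, (Z ^ dmin) ^ 2 / 2 ≤ E c + E (c + c₀') := by
    intro c
    have h1 := hCS c
    have h2 := hErr c
    linarith
  have hshift : ∑ c : C, E (c + c₀') = ∑ c : C, E c :=
    Fintype.sum_equiv (Equiv.addRight c₀') _ _ fun c => rfl
  have hsumE : (Fintype.card C : ℝ) * ((Z ^ dmin) ^ 2 / 2) ≤ 2 * ∑ c : C, E c := by
    calc (Fintype.card C : ℝ) * ((Z ^ dmin) ^ 2 / 2)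
        = ∑ _c : C, (Z ^ dmin) ^ 2 / 2 := by
          rw [Finset.sum_const, nsmul_eq_mul, Fintype.card]
      _ ≤ ∑ c : C, (E c + E (c + c₀')) := Finset.sum_le_sum fun c _ => hpair c
      _ = ∑ c : C, E c + ∑ c : C, E (c + c₀') := Finset.sum_add_distrib
      _ = 2 * ∑ c : C, E c := by rw [hshift]; ring
  have hcard : 0 < (Fintype.card C : ℝ) := by
    exact_mod_cast Fintype.card_pos
  have hgoal : Z ^ (2 * dmin) = (Z ^ dmin) ^ 2 := by
    rw [mul_comm, pow_mul]
  rw [hgoal, one_div, inv_mul_eq_div, le_div_iff₀ hcard]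
  nlinarith [hsumE]
end

section
/- Let W be a discrete binary-input memoryless symmetric channel with Bhattacharyya parameter Z(W), let n ≥ 1, and let c ∈ 𝔽₂ⁿ be a word of Hamming weight w ≥ 1. Then, when the all-zero word is transmitted over the memoryless extension of W, the probability that the received sequence y satisfies P(y|c) ≥ P(y|0) is at least (1/2)·(1 − √(1 − Z(W)^{2w})); that is, Σ_{y∈Yⁿ : P(y|c) ≥ P(y|0)} P(y|0) ≥ (1/2)·(1 − √(1 − Z(W)^{2w})). -/
open Finset

private lemma sqrt_prod' {ι : Type*} (s : Finset ι) (f : ι → ℝ) (h : ∀ i ∈ s, 0 ≤ f i) :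
    Real.sqrt (∏ i ∈ s, f i) = ∏ i ∈ s, Real.sqrt (f i) := by
  induction s using Finset.cons_induction with
  | empty => simp
  | cons a s ha ih =>
    rw [prod_cons, prod_cons, Real.sqrt_mul (h a (mem_cons_self a s)),
      ih (fun i hi => h i (mem_cons_of_mem hi))]

private lemma tv_le {α : Type*} [Fintype α] (p q : α → ℝ)
    (hp : ∀ a, 0 ≤ p a) (hq : ∀ a, 0 ≤ q a)
    (hp1 : ∑ a, p a = 1) (hq1 : ∑ a, q a = 1) :
    ∑ a, |p a - q a| ≤ 2 * Real.sqrt (1 - (∑ a, Real.sqrt (p a * q a)) ^ 2) := by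
  set B := ∑ a, Real.sqrt (p a * q a) with hB
  have hBpq : ∀ a : α, Real.sqrt (p a * q a) = Real.sqrt (p a) * Real.sqrt (q a) :=
    fun a => Real.sqrt_mul (hp a) _
  have h1 : ∑ a, (Real.sqrt (p a) - Real.sqrt (q a)) ^ 2 = 2 - 2 * B := by
    have : ∀ a : α, (Real.sqrt (p a) - Real.sqrt (q a)) ^ 2
        = p a + q a - 2 * Real.sqrt (p a * q a) := by
      intro a
      rw [sub_sq, Real.sq_sqrt (hp a), Real.sq_sqrt (hq a), hBpq a]; ring
    rw [Finset.sum_congr rfl fun a _ => this a]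
    rw [Finset.sum_sub_distrib, Finset.sum_add_distrib, hp1, hq1, ← Finset.mul_sum, ← hB]
    norm_num
  have h2 : ∑ a, (Real.sqrt (p a) + Real.sqrt (q a)) ^ 2 = 2 + 2 * B := by
    have : ∀ a : α, (Real.sqrt (p a) + Real.sqrt (q a)) ^ 2
        = p a + q a + 2 * Real.sqrt (p a * q a) := by
      intro a
      rw [add_sq, Real.sq_sqrt (hp a), Real.sq_sqrt (hq a), hBpq a]; ring
    rw [Finset.sum_congr rfl fun a _ => this a]
    rw [Finset.sum_add_distrib, Finset.sum_add_distrib, hp1, hq1, ← Finset.mul_sum, ← hB]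
    norm_num
  have hfg : ∀ a : α, |Real.sqrt (p a) - Real.sqrt (q a)| * (Real.sqrt (p a) + Real.sqrt (q a))
      = |p a - q a| := by
    intro a
    rw [← abs_of_nonneg (add_nonneg (Real.sqrt_nonneg (p a)) (Real.sqrt_nonneg (q a))),
      ← abs_mul]
    congr 1
    linear_combination Real.sq_sqrt (hp a) - Real.sq_sqrt (hq a)
  have cs := Finset.sum_mul_sq_le_sq_mul_sq Finset.univ
    (fun a => |Real.sqrt (p a) - Real.sqrt (q a)|) (fun a => Real.sqrt (p a) + Real.sqrt (q a))
  simp only [hfg, sq_abs] at cs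
  rw [h1, h2] at cs
  have hsq : (∑ a, |p a - q a|) ^ 2 ≤ 4 * (1 - B ^ 2) := by nlinarith [cs]
  have hnn : 0 ≤ ∑ a, |p a - q a| := Finset.sum_nonneg fun a _ => abs_nonneg _
  calc ∑ a, |p a - q a| = Real.sqrt ((∑ a, |p a - q a|) ^ 2) := (Real.sqrt_sq hnn).symm
    _ ≤ Real.sqrt (4 * (1 - B ^ 2)) := Real.sqrt_le_sqrt hsq
    _ = 2 * Real.sqrt (1 - B ^ 2) := by
        rw [show (4 : ℝ) = 2 ^ 2 by norm_num, Real.sqrt_mul (by positivity),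
          Real.sqrt_sq (by norm_num : (0:ℝ) ≤ 2)]

theorem stmt_11
    {Y : Type*} [Fintype Y]
    (W : ZMod 2 → Y → ℝ)
    -- `W` is a discrete channel
    (hW_nonneg : ∀ x y, 0 ≤ W x y)
    (hW_sum : ∀ x, ∑ y, W x y = 1)
    -- `W` is symmetric: there is an involution pairing the outputs
    (π : Y → Y) (hπ : Function.Involutive π)
    (hsym : ∀ y, W 0 y = W 1 (π y))
    (n : ℕ) (hn : 1 ≤ n)
    (c : Fin n → ZMod 2) (w : ℕ) (hw : hammingNorm c = w) (hw1 : 1 ≤ w) :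
    (1 / 2) * (1 - Real.sqrt (1 - (∑ y, Real.sqrt (W 0 y * W 1 y)) ^ (2 * w))) ≤
      ∑ y ∈ Finset.univ.filter
          (fun y : Fin n → Y => ∏ i, W 0 (y i) ≤ ∏ i, W (c i) (y i)),
        ∏ i, W 0 (y i) := by
  classical
  set Z : ℝ := ∑ y, Real.sqrt (W 0 y * W 1 y) with hZdef
  set P : (Fin n → Y) → ℝ := fun y => ∏ i, W 0 (y i) with hPdef
  set Q : (Fin n → Y) → ℝ := fun y => ∏ i, W (c i) (y i) with hQdef
  have hcase : ∀ x : ZMod 2, x = 0 ∨ x = 1 := by decide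
  have hPnn : ∀ y, 0 ≤ P y := fun y => Finset.prod_nonneg fun i _ => hW_nonneg _ _
  have hQnn : ∀ y, 0 ≤ Q y := fun y => Finset.prod_nonneg fun i _ => hW_nonneg _ _
  have hP1 : ∑ y, P y = 1 := by
    rw [hPdef, ← Fintype.prod_sum]
    simp [hW_sum]
  have hQ1 : ∑ y, Q y = 1 := by
    rw [hQdef, ← Fintype.prod_sum]
    simp [hW_sum]
  -- Bhattacharyya of the product channel
  have hB : (∑ y, Real.sqrt (P y * Q y)) = Z ^ w := by
    have step1 : ∀ y : Fin n → Y,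
        Real.sqrt (P y * Q y) = ∏ i, Real.sqrt (W 0 (y i) * W (c i) (y i)) := by
      intro y
      rw [hPdef, hQdef, ← Finset.prod_mul_distrib]
      exact sqrt_prod' _ _ fun i _ => mul_nonneg (hW_nonneg _ _) (hW_nonneg _ _)
    rw [Finset.sum_congr rfl fun y _ => step1 y,
      ← Fintype.prod_sum (fun (i : Fin n) (a : Y) => Real.sqrt (W 0 a * W (c i) a))]
    have factor : ∀ i : Fin n,
        (∑ y : Y, Real.sqrt (W 0 y * W (c i) y)) = if c i ≠ 0 then Z else 1 := by
      intro i
      rcases hcase (c i) with h | h <;> rw [h] <;> simp [hZdef, Real.sqrt_mul_self (hW_nonneg 0 _), hW_sum 0]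
    rw [Finset.prod_congr rfl fun i _ => factor i, Finset.prod_ite, Finset.prod_const,
      Finset.prod_const, one_pow, mul_one, ← hw]
    rfl
  -- the symmetry map
  set σ : (Fin n → Y) → (Fin n → Y) := fun y i => if c i = 0 then y i else π (y i) with hσdef
  have hσσ : ∀ y, σ (σ y) = y := by
    intro y; funext i
    rcases hcase (c i) with h | h <;> simp [hσdef, h, hπ (y i)]
  have hPσ : ∀ y, P (σ y) = Q y := by
    intro y
    refine Finset.prod_congr rfl fun i _ => ?_
    rcases hcase (c i) with h | h <;> simp only [hσdef, h]
    · simp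
    · simp only [if_neg (by simp [h] : ¬ (1 : ZMod 2) = 0)]
      rw [hsym (π (y i)), hπ (y i)]
  have hQσ : ∀ y, Q (σ y) = P y := by
    intro y
    refine Finset.prod_congr rfl fun i _ => ?_
    rcases hcase (c i) with h | h <;> simp only [hσdef, h]
    · simp
    · simp only [if_neg (by simp [h] : ¬ (1 : ZMod 2) = 0)]
      rw [← hsym (y i)]
  -- the two decoding regions
  set A : Finset (Fin n → Y) := Finset.univ.filter (fun y => P y ≤ Q y) with hAdef
  set A' : Finset (Fin n → Y) := Finset.univ.filter (fun y => Q y ≤ P y) with hA'def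
  have hQA : ∑ y ∈ A, Q y = ∑ y ∈ A', P y := by
    refine Finset.sum_bij' (fun y _ => σ y) (fun y _ => σ y) ?_ ?_ ?_ ?_ ?_
    · intro y hy
      simp only [hAdef, Finset.mem_filter, Finset.mem_univ, true_and] at hy
      simp only [hA'def, Finset.mem_filter, Finset.mem_univ, true_and, hPσ, hQσ]
      exact hy
    · intro y hy
      simp only [hA'def, Finset.mem_filter, Finset.mem_univ, true_and] at hy
      simp only [hAdef, Finset.mem_filter, Finset.mem_univ, true_and, hPσ, hQσ]
      exact hy
    · intro y _; exact hσσ y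
    · intro y _; exact hσσ y
    · intro y _; rw [hPσ]
  -- P(A') + P(A) ≥ 1
  have hcover : 1 ≤ ∑ y ∈ A', P y + ∑ y ∈ A, P y := by
    have hsplit : ∑ y ∈ A', P y + ∑ y ∈ Finset.univ.filter (fun y => ¬ Q y ≤ P y), P y = 1 := by
      rw [hA'def, Finset.sum_filter_add_sum_filter_not, hP1]
    have hsub : Finset.univ.filter (fun y => ¬ Q y ≤ P y) ⊆ A := by
      intro y hy
      simp only [Finset.mem_filter, Finset.mem_univ, true_and, not_le] at hy
      simp only [hAdef, Finset.mem_filter, Finset.mem_univ, true_and]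
      exact le_of_lt hy
    have := Finset.sum_le_sum_of_subset_of_nonneg hsub (fun y _ _ => hPnn y)
    linarith
  -- total variation bound
  have htv := tv_le P Q hPnn hQnn hP1 hQ1
  rw [hB] at htv
  have hBsq : (Z ^ w) ^ 2 = Z ^ (2 * w) := by rw [← pow_mul]; ring_nf
  rw [hBsq] at htv
  -- Q(A) - P(A) ≤ (1/2) ∑ |P - Q|
  have hdiff : ∑ y ∈ A, Q y - ∑ y ∈ A, P y ≤ Real.sqrt (1 - Z ^ (2 * w)) := by
    have h0 : ∑ y ∈ A, (Q y - P y) + ∑ y ∈ Finset.univ.filter (fun y => ¬ P y ≤ Q y), (Q y - P y)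
        = 0 := by
      rw [hAdef, Finset.sum_filter_add_sum_filter_not, Finset.sum_sub_distrib, hP1, hQ1, sub_self]
    have h1 : ∑ y ∈ A, (Q y - P y) ≤ ∑ y ∈ A, |P y - Q y| :=
      Finset.sum_le_sum fun y _ => by rw [abs_sub_comm]; exact le_abs_self _
    have h2 : ∑ y ∈ Finset.univ.filter (fun y => ¬ P y ≤ Q y), (P y - Q y)
        ≤ ∑ y ∈ Finset.univ.filter (fun y => ¬ P y ≤ Q y), |P y - Q y| :=
      Finset.sum_le_sum fun y _ => le_abs_self _
    have h3 : ∑ y ∈ A, |P y - Q y|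
        + ∑ y ∈ Finset.univ.filter (fun y => ¬ P y ≤ Q y), |P y - Q y|
        = ∑ y, |P y - Q y| := by
      rw [hAdef, Finset.sum_filter_add_sum_filter_not]
    have h4 : ∑ y ∈ Finset.univ.filter (fun y => ¬ P y ≤ Q y), (P y - Q y)
        = ∑ y ∈ A, (Q y - P y) := by
      have := h0
      simp only [Finset.sum_sub_distrib] at this ⊢
      linarith
    have h5 : ∑ y ∈ A, (Q y - P y) = ∑ y ∈ A, Q y - ∑ y ∈ A, P y :=
      Finset.sum_sub_distrib _ _
    linarith
  rw [hQA] at hdiff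
  linarith
end

section
/- Let ε ∈ (0,1) and let {Z_n} be the Bhattacharyya process of the binary erasure channel BEC(ε): Z_0 = ε and Z_{n+1} = Z_n² if B_n = 0, Z_{n+1} = 2Z_n − Z_n² if B_n = 1, where {B_n} are i.i.d. uniform on {0,1}. Then Z_n converges almost surely to a random variable Z_∞ taking values in {0,1}, with P(Z_∞ = 0) = 1 − ε and P(Z_∞ = 1) = ε. -/
open MeasureTheory ProbabilityTheory Filter

lemma key_ineq {z : ℝ} (h0 : 0 ≤ z) (h1 : z ≤ 1) :
    Real.sqrt (z^2 * (1 - z^2)) + Real.sqrt ((2*z - z^2) * (1 - (2*z - z^2)))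
      ≤ Real.sqrt 3 * Real.sqrt (z * (1 - z)) := by
  set t : ℝ := z * (1 - z) with ht
  have ht0 : 0 ≤ t := mul_nonneg h0 (by linarith)
  have ht4 : t ≤ 1/4 := by nlinarith [sq_nonneg (z - 1/2)]
  set u : ℝ := z^2 * (1 - z^2) with hu
  set v : ℝ := (2*z - z^2) * (1 - (2*z - z^2)) with hv
  have hu0 : 0 ≤ u := by nlinarith
  have hv0 : 0 ≤ v := by nlinarith [sq_nonneg (1 - z)]
  have huv : u + v = 2*t - 2*t^2 := by simp only [hu, hv, ht]; ring
  have hprod : u * v = t^3 * (2 + t) := by simp only [hu, hv, ht]; ring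
  rw [← Real.sqrt_mul (by norm_num : (0:ℝ) ≤ 3) t]
  rw [Real.le_sqrt (by positivity) (by positivity)]
  have hab : Real.sqrt u * Real.sqrt v = Real.sqrt (u * v) := (Real.sqrt_mul hu0 v).symm
  have hsq : (Real.sqrt u + Real.sqrt v)^2 = u + v + 2 * Real.sqrt (u*v) := by
    rw [add_sq, Real.sq_sqrt hu0, Real.sq_sqrt hv0, mul_assoc, hab]; ring
  rw [hsq, huv, hprod]
  have hbd : Real.sqrt (t^3 * (2 + t)) ≤ t * (1 + 2*t) / 2 := by
    rw [show t * (1 + 2*t) / 2 = Real.sqrt ((t * (1 + 2*t) / 2)^2) from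
      (Real.sqrt_sq (by nlinarith)).symm]
    apply Real.sqrt_le_sqrt
    nlinarith [sq_nonneg t, ht0, ht4]
  nlinarith

theorem stmt_13
    {Ω : Type*} [MeasurableSpace Ω] (P : Measure Ω) [IsProbabilityMeasure P]
    (B : ℕ → Ω → Bool)
    (hBmeas : ∀ n, Measurable (B n))
    -- `{B_n}` are i.i.d. uniform on `{0, 1}` (`false` codes `0`, `true` codes `1`)
    (hindep : iIndepFun B P)
    (hB0 : ∀ n, P {ω | B n ω = false} = 1 / 2)
    (hB1 : ∀ n, P {ω | B n ω = true} = 1 / 2)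
    (ε : ℝ) (hε : ε ∈ Set.Ioo (0 : ℝ) 1)
    -- the Bhattacharyya process of `BEC(ε)`
    (Z : ℕ → Ω → ℝ)
    (hZ0 : ∀ ω, Z 0 ω = ε)
    (hZrec : ∀ n ω, Z (n + 1) ω =
      if B n ω = false then (Z n ω) ^ 2 else 2 * Z n ω - (Z n ω) ^ 2) :
    ∃ Zinf : Ω → ℝ, Measurable Zinf ∧
      (∀ᵐ ω ∂P, Tendsto (fun n => Z n ω) atTop (nhds (Zinf ω))) ∧
      (∀ᵐ ω ∂P, Zinf ω = 0 ∨ Zinf ω = 1) ∧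
      P {ω | Zinf ω = 0} = ENNReal.ofReal (1 - ε) ∧
      P {ω | Zinf ω = 1} = ENNReal.ofReal ε := by
  obtain ⟨hε0, hε1⟩ := hε
  -- basic bounds
  have hZmem : ∀ n ω, Z n ω ∈ Set.Icc (0:ℝ) 1 := by
    intro n
    induction n with
    | zero => intro ω; rw [hZ0 ω]; exact ⟨hε0.le, hε1.le⟩
    | succ n ih =>
      intro ω
      obtain ⟨h0, h1⟩ := ih ω
      rw [Set.mem_Icc, hZrec n ω]
      by_cases hb : B n ω = false
      · rw [if_pos hb]; constructor <;> nlinarith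
      · rw [if_neg hb]; constructor <;> nlinarith [sq_nonneg (1 - Z n ω)]
  -- measurability
  have hZmeas : ∀ n, Measurable (Z n) := by
    intro n
    induction n with
    | zero => simpa [funext hZ0] using measurable_const
    | succ n ih =>
      have : Z (n+1) = fun ω => if B n ω = false then (Z n ω) ^ 2
          else 2 * Z n ω - (Z n ω) ^ 2 := funext (hZrec n)
      rw [this]
      exact Measurable.ite ((hBmeas n) (measurableSet_singleton false))
        (ih.pow_const 2) ((measurable_const.mul ih).sub (ih.pow_const 2))
  -- factorization of `Z n` through the first `n` bits
  have hfac : ∀ n, ∃ ψ : ({ i // i ∈ Finset.range n } → Bool) → ℝ,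
      ∀ ω, Z n ω = ψ (fun i => B i.1 ω) := by
    intro n
    induction n with
    | zero => exact ⟨fun _ => ε, fun ω => hZ0 ω⟩
    | succ n ih =>
      obtain ⟨ψ, hψ⟩ := ih
      refine ⟨fun v =>
        if v ⟨n, Finset.self_mem_range_succ n⟩ = false
        then (ψ (fun i => v ⟨i.1, Finset.mem_range.mpr
          (Nat.lt_succ_of_lt (Finset.mem_range.mp i.2))⟩))^2
        else 2 * ψ (fun i => v ⟨i.1, Finset.mem_range.mpr
          (Nat.lt_succ_of_lt (Finset.mem_range.mp i.2))⟩)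
          - (ψ (fun i => v ⟨i.1, Finset.mem_range.mpr
          (Nat.lt_succ_of_lt (Finset.mem_range.mp i.2))⟩))^2,
        fun ω => ?_⟩
      rw [hZrec n ω, hψ ω]
  -- independence of `Z n` and `B n`
  have hZB : ∀ n, IndepFun (Z n) (B n) P := by
    intro n
    obtain ⟨ψ, hψ⟩ := hfac n
    have h := hindep.indepFun_finset (Finset.range n) {n}
      (by simp [Finset.disjoint_singleton_right]) hBmeas
    have h1 : Z n = ψ ∘ (fun ω (i : (Finset.range n : Finset ℕ)) => B i ω) := funext hψ
    have h2 : B n = (fun v : (({n} : Finset ℕ) → Bool) => v ⟨n, Finset.mem_singleton_self n⟩)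
        ∘ (fun ω (i : (({n} : Finset ℕ))) => B i ω) := funext fun ω => rfl
    rw [h1, h2]
    exact h.comp (measurable_of_countable ψ) (measurable_pi_apply _)
  -- product formula
  have hprod : ∀ n (f : ℝ → ℝ) (g : Bool → ℝ), Measurable f →
      ∫ ω, f (Z n ω) * g (B n ω) ∂P
        = (∫ ω, f (Z n ω) ∂P) * (∫ ω, g (B n ω) ∂P) := by
    intro n f g hf
    have h := IndepFun.integral_fun_mul_eq_mul_integral ((hZB n).comp hf (measurable_of_countable g))
      (hf.comp (hZmeas n)).aestronglyMeasurable
      ((measurable_of_countable g).comp (hBmeas n)).aestronglyMeasurable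
    simpa [Function.comp] using h
  -- integrals of bit indicator factors
  have hgint : ∀ n (g : Bool → ℝ),
      ∫ ω, g (B n ω) ∂P = (g false) * (1/2) + (g true) * (1/2) := by
    intro n g
    have hsplit : (fun ω => g (B n ω))
        = fun ω => Set.indicator {ω | B n ω = false} (fun _ => g false) ω
            + Set.indicator {ω | B n ω = true} (fun _ => g true) ω := by
      funext ω
      cases hb : B n ω <;> simp [Set.indicator, hb]
    have hsf : MeasurableSet {ω | B n ω = false} := hBmeas n (measurableSet_singleton false)
    have hst : MeasurableSet {ω | B n ω = true} := hBmeas n (measurableSet_singleton true)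
    rw [hsplit, integral_add ((integrable_const (g false)).indicator hsf)
      ((integrable_const (g true)).indicator hst),
      integral_indicator_const _ hsf, integral_indicator_const _ hst, measureReal_def, measureReal_def, hB0 n, hB1 n]
    have h2 : ((1:ENNReal)/2).toReal = 1/2 := by
      rw [ENNReal.toReal_div]; norm_num
    rw [h2, smul_eq_mul, smul_eq_mul]
    ring
  -- generic integrability
  have hIntf : ∀ n (f : ℝ → ℝ), Continuous f → Integrable (fun ω => f (Z n ω)) P := by
    intro n f hf
    obtain ⟨C, hC⟩ := isCompact_Icc.exists_bound_of_continuousOn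
      (hf.continuousOn : ContinuousOn f (Set.Icc (0:ℝ) 1))
    exact (integrable_const C).mono'
      ((hf.measurable.comp (hZmeas n)).aestronglyMeasurable)
      (ae_of_all _ fun ω => hC _ (hZmem n ω))
  have hIntfg : ∀ n (f : ℝ → ℝ) (g : Bool → ℝ), Continuous f →
      Integrable (fun ω => f (Z n ω) * g (B n ω)) P := by
    intro n f g hf
    have hb : ∀ ω, ‖g (B n ω)‖ ≤ max ‖g false‖ ‖g true‖ := by
      intro ω; cases hgb : B n ω <;> simp [hgb, le_max_left, le_max_right]
    have := ((hIntf n f hf).bdd_mul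
      (((measurable_of_countable g).comp (hBmeas n)).aestronglyMeasurable)
      (c := max ‖g false‖ ‖g true‖) (ae_of_all _ hb))
    simpa [mul_comm] using this
  -- the splitting identity for integrals
  have hsplit : ∀ n (f : ℝ → ℝ), Continuous f →
      ∫ ω, f (Z (n+1) ω) ∂P
        = (∫ ω, f ((Z n ω)^2) ∂P) * (1/2) + (∫ ω, f (2 * Z n ω - (Z n ω)^2) ∂P) * (1/2) := by
    intro n f hf
    have hcont2 : Continuous fun z : ℝ => f (z^2) := hf.comp (continuous_pow 2)
    have hcont3 : Continuous fun z : ℝ => f (2*z - z^2) :=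
      hf.comp ((continuous_const.mul continuous_id).sub (continuous_pow 2))
    have hpt : (fun ω => f (Z (n+1) ω))
        = fun ω => f ((Z n ω)^2) * (if B n ω = false then (1:ℝ) else 0)
            + f (2 * Z n ω - (Z n ω)^2) * (if B n ω = true then (1:ℝ) else 0) := by
      funext ω
      rw [hZrec n ω]
      cases hb : B n ω <;> simp [hb]
    rw [hpt, integral_add
        (by simpa using hIntfg n (fun z => f (z^2)) (fun b => if b = false then (1:ℝ) else 0) hcont2)
        (by simpa using hIntfg n (fun z => f (2*z - z^2)) (fun b => if b = true then (1:ℝ) else 0) hcont3)]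
    have e1 := hprod n (fun z => f (z^2)) (fun b => if b = false then (1:ℝ) else 0) hcont2.measurable
    have e2 := hprod n (fun z => f (2*z - z^2)) (fun b => if b = true then (1:ℝ) else 0) hcont3.measurable
    have g1 := hgint n (fun b => if b = false then (1:ℝ) else 0)
    have g2 := hgint n (fun b => if b = true then (1:ℝ) else 0)
    simp only at e1 e2 g1 g2
    rw [e1, e2, g1, g2]
    norm_num
  -- the mean is constant
  have hmean : ∀ n, ∫ ω, Z n ω ∂P = ε := by
    intro n
    induction n with
    | zero => simp [funext hZ0]
    | succ n ih =>
      have h := hsplit n id continuous_id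
      simp only [id] at h
      have h2 : ∫ ω, 2 * Z n ω - (Z n ω)^2 ∂P
          = 2 * (∫ ω, Z n ω ∂P) - ∫ ω, (Z n ω)^2 ∂P := by
        rw [integral_sub ((hIntf n (fun z => z) continuous_id).const_mul 2)
          (hIntf n (fun z => z^2) (continuous_pow 2)), integral_const_mul]
      rw [h, h2, ih]
      ring
  -- decay of the expected root-variance
  set q : ℝ := Real.sqrt 3 / 2 with hq
  have hq0 : 0 ≤ q := by positivity
  have hq1 : q < 1 := by
    rw [hq, div_lt_one (by norm_num : (0:ℝ) < 2)]
    rw [show (2:ℝ) = Real.sqrt 4 by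
      rw [show (4:ℝ) = 2^2 by norm_num, Real.sqrt_sq (by norm_num)]]
    exact Real.sqrt_lt_sqrt (by norm_num) (by norm_num)
  set M : ℕ → Ω → ℝ := fun n ω => Real.sqrt (Z n ω * (1 - Z n ω)) with hM
  have hc23 : Continuous fun z : ℝ => 2*z - z^2 :=
    (continuous_const.mul continuous_id).sub (continuous_pow 2)
  have hMcont : Continuous fun z : ℝ => Real.sqrt (z * (1 - z)) :=
    Real.continuous_sqrt.comp (continuous_id.mul (continuous_const.sub continuous_id))
  have hMint : ∀ n, Integrable (M n) P := fun n =>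
    hIntf n (fun z => Real.sqrt (z * (1 - z))) hMcont
  have hMnonneg : ∀ n ω, 0 ≤ M n ω := fun n ω => Real.sqrt_nonneg _
  have hMdecay : ∀ n, ∫ ω, M n ω ∂P ≤ q ^ n * (1/2) := by
    intro n
    induction n with
    | zero =>
      have : ∫ ω, M 0 ω ∂P = Real.sqrt (ε * (1 - ε)) := by
        simp [hM, funext hZ0]
      rw [this]
      rw [show ((q:ℝ))^0 * (1/2) = Real.sqrt (1/4) by
        rw [show (1/4 : ℝ) = (1/2)^2 by norm_num, Real.sqrt_sq (by norm_num)]; norm_num]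
      exact Real.sqrt_le_sqrt (by nlinarith [sq_nonneg (ε - 1/2)])
    | succ n ih =>
      have h := hsplit n (fun z => Real.sqrt (z * (1 - z))) hMcont
      have hMn1 : ∫ ω, M (n+1) ω ∂P
          = (∫ ω, Real.sqrt ((Z n ω)^2 * (1 - (Z n ω)^2)) ∂P) * (1/2)
            + (∫ ω, Real.sqrt ((2 * Z n ω - (Z n ω)^2) * (1 - (2 * Z n ω - (Z n ω)^2))) ∂P) * (1/2) := by
        simpa [hM] using h
      have hcomb : (∫ ω, Real.sqrt ((Z n ω)^2 * (1 - (Z n ω)^2)) ∂P) * (1/2)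
            + (∫ ω, Real.sqrt ((2 * Z n ω - (Z n ω)^2) * (1 - (2 * Z n ω - (Z n ω)^2))) ∂P) * (1/2)
          ≤ q * ∫ ω, M n ω ∂P := by
        have hi1 : Integrable (fun ω => Real.sqrt ((Z n ω)^2 * (1 - (Z n ω)^2))) P :=
          hIntf n (fun z => Real.sqrt (z^2 * (1 - z^2)))
            (Real.continuous_sqrt.comp ((continuous_pow 2).mul (continuous_const.sub (continuous_pow 2))))
        have hi2 : Integrable (fun ω => Real.sqrt ((2 * Z n ω - (Z n ω)^2) * (1 - (2 * Z n ω - (Z n ω)^2)))) P :=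
          hIntf n (fun z => Real.sqrt ((2*z - z^2) * (1 - (2*z - z^2))))
            (Real.continuous_sqrt.comp (hc23.mul (continuous_const.sub hc23)))
        have hsum : ∫ ω, (Real.sqrt ((Z n ω)^2 * (1 - (Z n ω)^2))
              + Real.sqrt ((2 * Z n ω - (Z n ω)^2) * (1 - (2 * Z n ω - (Z n ω)^2)))) ∂P
            ≤ ∫ ω, Real.sqrt 3 * M n ω ∂P := by
          apply integral_mono (hi1.add hi2) ((hMint n).const_mul _)
          intro ω
          obtain ⟨h0, h1⟩ := hZmem n ω
          exact key_ineq h0 h1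
        rw [integral_add hi1 hi2, integral_const_mul] at hsum
        rw [hq]
        linarith
      calc ∫ ω, M (n+1) ω ∂P ≤ q * ∫ ω, M n ω ∂P := by rw [hMn1]; exact hcomb
        _ ≤ q * (q^n * (1/2)) := by
            apply mul_le_mul_of_nonneg_left ih hq0
        _ = q^(n+1) * (1/2) := by ring
  -- almost sure summability of M
  have hMmeas : ∀ n, Measurable (M n) := fun n => (hMcont.measurable).comp (hZmeas n)
  have haesum : ∀ᵐ ω ∂P, Summable fun n => M n ω := by
    have hlin : ∀ n, ∫⁻ ω, ENNReal.ofReal (M n ω) ∂P = ENNReal.ofReal (∫ ω, M n ω ∂P) :=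
      fun n => (ofReal_integral_eq_lintegral_ofReal (hMint n)
        (ae_of_all _ fun ω => hMnonneg n ω)).symm
    have hlt : ∫⁻ ω, (∑' n, ENNReal.ofReal (M n ω)) ∂P ≠ ⊤ := by
      rw [lintegral_tsum (fun n => ((hMmeas n).ennreal_ofReal).aemeasurable)]
      have hle : ∑' n, ∫⁻ ω, ENNReal.ofReal (M n ω) ∂P
          ≤ ∑' n, ENNReal.ofReal (q^n * (1/2)) := by
        apply ENNReal.tsum_le_tsum
        intro n
        rw [hlin n]
        exact ENNReal.ofReal_le_ofReal (hMdecay n)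
      have hsumq : Summable fun n : ℕ => q^n * (1/2) :=
        (summable_geometric_of_lt_one hq0 hq1).mul_right _
      have : ∑' n, ENNReal.ofReal (q^n * (1/2)) ≠ ⊤ := by
        rw [← ENNReal.ofReal_tsum_of_nonneg (fun n => by positivity) hsumq]
        exact ENNReal.ofReal_ne_top
      exact ne_top_of_le_ne_top this hle
    have hae := ae_lt_top' ((Measurable.ennreal_tsum
      (fun n => (hMmeas n).ennreal_ofReal)).aemeasurable) hlt
    filter_upwards [hae] with ω hω
    have hs := ENNReal.summable_toReal hω.ne
    convert hs using 2 with n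
    rw [ENNReal.toReal_ofReal (hMnonneg n ω)]
  -- almost sure convergence
  set Zinf : Ω → ℝ := fun ω => limsup (fun n => Z n ω) atTop with hZinf
  have hZinfMeas : Measurable Zinf := Measurable.limsup hZmeas
  have haeconv : ∀ᵐ ω ∂P, Tendsto (fun n => Z n ω) atTop (nhds (Zinf ω))
      ∧ (Zinf ω = 0 ∨ Zinf ω = 1) := by
    filter_upwards [haesum] with ω hsum
    have hdist : ∀ n, dist (Z n ω) (Z (n+1) ω) ≤ M n ω := by
      intro n
      have hz := hZmem n ω
      obtain ⟨h0, h1⟩ := hz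
      have hd : dist (Z n ω) (Z (n+1) ω) = Z n ω * (1 - Z n ω) := by
        rw [Real.dist_eq, hZrec n ω]
        by_cases hb : B n ω = false
        · rw [if_pos hb, abs_of_nonneg (by nlinarith)]; ring
        · rw [if_neg hb, abs_of_nonpos (by nlinarith)]; ring
      have ht0 : 0 ≤ Z n ω * (1 - Z n ω) := mul_nonneg h0 (by linarith)
      have ht4 : Z n ω * (1 - Z n ω) ≤ 1/4 := by nlinarith [sq_nonneg (Z n ω - 1/2)]
      rw [hd, hM]
      rw [show Z n ω * (1 - Z n ω)
          = Real.sqrt ((Z n ω * (1 - Z n ω))^2) from (Real.sqrt_sq ht0).symm]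
      apply Real.sqrt_le_sqrt
      nlinarith
    have hcauchy : CauchySeq fun n => Z n ω :=
      cauchySeq_of_summable_dist (Summable.of_nonneg_of_le (fun n => dist_nonneg) hdist hsum)
    obtain ⟨L, hL⟩ := cauchySeq_tendsto_of_complete hcauchy
    have hlim : Zinf ω = L := hL.limsup_eq
    have hM0 : Tendsto (fun n => M n ω) atTop (nhds 0) := hsum.tendsto_atTop_zero
    have hT0 : Tendsto (fun n => Z n ω * (1 - Z n ω)) atTop (nhds 0) := by
      have : ∀ n, Z n ω * (1 - Z n ω) = (M n ω)^2 := by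
        intro n
        obtain ⟨h0, h1⟩ := hZmem n ω
        rw [hM]; rw [Real.sq_sqrt (by nlinarith)]
      simp only [this]
      simpa using hM0.pow 2
    have hT1 : Tendsto (fun n => Z n ω * (1 - Z n ω)) atTop (nhds (L * (1 - L))) :=
      hL.mul (tendsto_const_nhds.sub hL)
    have hLL : L * (1 - L) = 0 := tendsto_nhds_unique hT1 hT0
    rw [hlim]
    refine ⟨hL, ?_⟩
    rcases mul_eq_zero.mp hLL with h | h
    · exact Or.inl h
    · exact Or.inr (by linarith)
  -- the limit integral
  have hconv : ∀ᵐ ω ∂P, Tendsto (fun n => Z n ω) atTop (nhds (Zinf ω)) :=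
    haeconv.mono fun ω h => h.1
  have h01 : ∀ᵐ ω ∂P, Zinf ω = 0 ∨ Zinf ω = 1 :=
    haeconv.mono fun ω h => h.2
  have hIntLim : ∫ ω, Zinf ω ∂P = ε := by
    have hTend : Tendsto (fun n => ∫ ω, Z n ω ∂P) atTop (nhds (∫ ω, Zinf ω ∂P)) :=
      tendsto_integral_of_dominated_convergence (fun _ => (1:ℝ))
        (fun n => (hZmeas n).aestronglyMeasurable) (integrable_const 1)
        (fun n => ae_of_all _ fun ω => by
          have := hZmem n ω
          rw [Real.norm_eq_abs, abs_of_nonneg this.1]; exact this.2)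
        hconv
    have : Tendsto (fun _ : ℕ => ε) atTop (nhds (∫ ω, Zinf ω ∂P)) := by
      simpa [hmean] using hTend
    exact (tendsto_nhds_unique tendsto_const_nhds this).symm
  -- compute the probabilities
  set A : Set Ω := {ω | Zinf ω = 1} with hA
  have hAmeas : MeasurableSet A := hZinfMeas (measurableSet_singleton 1)
  have hind : (fun ω => Zinf ω) =ᵐ[P] A.indicator (fun _ => (1:ℝ)) := by
    filter_upwards [h01] with ω hω
    rcases hω with h | h
    · have : ω ∉ A := by simp [hA, h]
      simp [Set.indicator, this, h]
    · have : ω ∈ A := by simp [hA, h]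
      simp [Set.indicator, this, h]
  have hPA : P A = ENNReal.ofReal ε := by
    have : ∫ ω, Zinf ω ∂P = (P A).toReal := by
      rw [integral_congr_ae hind, integral_indicator_const _ hAmeas]
      simp [measureReal_def]
    rw [hIntLim] at this
    rw [← ENNReal.ofReal_toReal (measure_ne_top P A), ← this]
  have hPA1 : P {ω | Zinf ω = 1} = ENNReal.ofReal ε := hPA
  have hPA0 : P {ω | Zinf ω = 0} = ENNReal.ofReal (1 - ε) := by
    have hAe : ({ω | Zinf ω = 0} : Set Ω) =ᵐ[P] (Aᶜ : Set Ω) := by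
      rw [Filter.eventuallyEq_set]
      filter_upwards [h01] with ω hω
      constructor
      · intro h0 h1
        have h0' : Zinf ω = 0 := h0
        have h1' : Zinf ω = 1 := h1
        exact absurd (h0'.symm.trans h1') (by norm_num)
      · intro hc
        have hc' : ¬ Zinf ω = 1 := hc
        rcases hω with h | h
        · exact h
        · exact absurd h hc'
    rw [measure_congr hAe, prob_compl_eq_one_sub hAmeas, hPA]
    rw [ENNReal.ofReal_sub 1 hε0.le, ENNReal.ofReal_one]
  exact ⟨Zinf, hZinfMeas, hconv, h01, hPA0, hPA1⟩
end
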